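/- Lemma 4.4 (averaging over hyperplanes in irrational directions): Let d ≥ 2 and let e be a unit vector in ℝ^d with e ∉ ℝℤ^d. Let ℱ be a compact subset (in the uniform norm) of the space of continuous ℤ^d-periodic functions ℝ^d → ℝ. Then sup { | ∫_{⟨e⟩^⊥} u(x + y) (4πt)^{-(d-1)/2} exp(−‖y‖²/(4t)) dℋ^{d-1}(y) − ∫_{[0,1]^d} u(z) dz | : x ∈ ℝ^d, u ∈ ℱ } → 0 as t → ∞. -/

import Mathlib

open Set Filter Topology MeasureTheory BoundedContinuousFunction

noncomputable section

abbrev Euc (d : ℕ) := EuclideanSpace ℝ (Fin d)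

def IsIntVec {d : ℕ} (z : Euc d) : Prop := ∀ i, ∃ n : ℤ, z i = (n : ℝ)

/-- p ∈ ℝℤ^d, i.e. p is a real multiple of an integer vector. -/
def RatDir {d : ℕ} (p : Euc d) : Prop :=
  ∃ (c : ℝ) (k : Fin d → ℤ), ∀ i, p i = c * (k i : ℝ)

def unitCube (d : ℕ) : Set (Euc d) := {y | ∀ i, y i ∈ Set.Icc (0:ℝ) 1}

/-!
The average over `x + V`, `V = (ℝ ∙ e)ᗮ`, against the heat kernel at time `t` is integration
against a Gaussian probability measure `heatMeasureAt V t x` on `ℝ^d`. Its characteristic function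
at `w` is `exp (i⟪x, w⟫) exp (-t ‖P_V w‖²)`, so on the character `z ↦ exp (2πi⟪k, z⟫)` the average
differs from the cube integral (which is `0` for `k ≠ 0`) by at most `exp (-4π²t ‖P_V k‖²)`,
uniformly in `x`; and `P_V k ≠ 0` for `k ≠ 0` precisely because `e` is irrational.
As all measures involved are probability measures, the functions for which the averages converge
form a closed subspace of the bounded continuous functions, which by Stone–Weierstrass on the torus
contains every continuous `ℤ^d`-periodic function; since the averages are 1-Lipschitz in the
function, the convergence is uniform on compact families. Uniformity in `x` is encoded by indexing
the measures by `(t, x)` and letting only `t` tend to infinity.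
-/

open Complex Module
open scoped InnerProductSpace

section HeatKernel

variable (V : Type*) [NormedAddCommGroup V] [InnerProductSpace ℝ V]

def heatKernel (t : ℝ) (y : V) : ℝ :=
  (4 * Real.pi * t) ^ (-(finrank ℝ V : ℝ) / 2) * Real.exp (-‖y‖ ^ 2 / (4 * t))

variable {V} {t : ℝ}

lemma heatKernel_nonneg (ht : 0 ≤ t) (y : V) : 0 ≤ heatKernel V t y := by
  unfold heatKernel; positivity

lemma continuous_heatKernel : Continuous (heatKernel V t) := by
  unfold heatKernel; fun_prop

variable [FiniteDimensional ℝ V] [MeasurableSpace V] [BorelSpace V]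

lemma integral_heatKernel_mul_cexp (ht : 0 < t) (w : V) :
    ∫ y, (heatKernel V t y : ℂ) * cexp (⟪y, w⟫_ℝ * I) = cexp (-(t * ‖w‖ ^ 2)) := by
  have hb : (0 : ℝ) < (((4 * t)⁻¹ : ℝ) : ℂ).re := by simpa using ht
  have hgauss := GaussianFourier.integral_cexp_neg_mul_sq_norm_add hb I w
  calc ∫ y, (heatKernel V t y : ℂ) * cexp (⟪y, w⟫_ℝ * I)
      = ((4 * Real.pi * t) ^ (-(finrank ℝ V : ℝ) / 2) : ℝ) *
          ∫ y : V, cexp (-(((4 * t)⁻¹ : ℝ) : ℂ) * ‖y‖ ^ 2 + I * ⟪w, y⟫_ℝ) := by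
        rw [← integral_const_mul]
        congr 1 with y
        simp only [heatKernel, ofReal_mul, ofReal_exp, mul_assoc, ← Complex.exp_add,
          real_inner_comm w y]
        congr 2
        push_cast
        ring
    _ = cexp (-(t * ‖w‖ ^ 2)) := by
        have hpos : 0 < 4 * Real.pi * t := by positivity
        have hbase : (Real.pi : ℂ) / (((4 * t)⁻¹ : ℝ) : ℂ) = ((4 * Real.pi * t : ℝ) : ℂ) := by
          push_cast; field_simp
        have hexp : (finrank ℝ V / 2 : ℂ) = ((finrank ℝ V / 2 : ℝ) : ℂ) := by push_cast; rfl
        rw [hgauss, hbase, ← mul_assoc, hexp, ← ofReal_cpow hpos.le, ← ofReal_mul,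
          ← Real.rpow_add hpos, neg_div, neg_add_cancel, Real.rpow_zero, ofReal_one, one_mul, I_sq]
        congr 1
        push_cast
        field_simp

lemma integral_heatKernel (ht : 0 < t) : ∫ y, heatKernel V t y = 1 := by
  have h := integral_heatKernel_mul_cexp (V := V) ht 0
  simp only [inner_zero_right, ofReal_zero, zero_mul, Complex.exp_zero, mul_one, norm_zero,
    integral_complex_ofReal] at h
  simpa using h

lemma integrable_heatKernel (ht : 0 < t) : Integrable (heatKernel V t) :=
  Integrable.of_integral_ne_zero (by rw [integral_heatKernel ht]; exact one_ne_zero)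

variable (V) in
def heatMeasure (t : ℝ) : Measure V :=
  volume.withDensity fun y => ENNReal.ofReal (heatKernel V t y)

lemma isProbabilityMeasure_heatMeasure (ht : 0 < t) :
    IsProbabilityMeasure (heatMeasure V t) := by
  constructor
  rw [heatMeasure, withDensity_apply _ MeasurableSet.univ, Measure.restrict_univ,
    ← ofReal_integral_eq_lintegral_ofReal (integrable_heatKernel ht)
      (ae_of_all _ (heatKernel_nonneg ht.le)), integral_heatKernel ht, ENNReal.ofReal_one]

lemma integral_heatMeasure {F : Type*} [NormedAddCommGroup F] [NormedSpace ℝ F] (ht : 0 ≤ t)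
    (g : V → F) : ∫ y, g y ∂heatMeasure V t = ∫ y, heatKernel V t y • g y := by
  rw [heatMeasure, integral_withDensity_eq_integral_toReal_smul
    (continuous_heatKernel.measurable.ennreal_ofReal)
    (ae_of_all _ fun _ => ENNReal.ofReal_lt_top)]
  simp only [ENNReal.toReal_ofReal (heatKernel_nonneg ht _)]

lemma charFun_heatMeasure (ht : 0 < t) (w : V) :
    charFun (heatMeasure V t) w = cexp (-(t * ‖w‖ ^ 2)) := by
  rw [charFun_apply, integral_heatMeasure ht.le, ← integral_heatKernel_mul_cexp ht]
  simp only [Complex.real_smul]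

end HeatKernel

section HeatMeasureAt

variable {E : Type*} [NormedAddCommGroup E] [InnerProductSpace ℝ E] [MeasurableSpace E]
  [BorelSpace E] (V : Submodule ℝ E) [FiniteDimensional ℝ V] {t : ℝ}

def heatMeasureAt (t : ℝ) (x : E) : Measure E :=
  (heatMeasure V t).map fun y : V => x + y

lemma isProbabilityMeasure_heatMeasureAt (ht : 0 < t) (x : E) :
    IsProbabilityMeasure (heatMeasureAt V t x) :=
  have := isProbabilityMeasure_heatMeasure (V := V) ht
  Measure.isProbabilityMeasure_map (by fun_prop)

instance (t : Ioi (0 : ℝ)) (x : E) : IsProbabilityMeasure (heatMeasureAt V t x) :=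
  isProbabilityMeasure_heatMeasureAt V t.2 x

lemma measurableEmbedding_add_coe (x : E) : MeasurableEmbedding fun y : V => x + y :=
  ((Homeomorph.addLeft x).isClosedEmbedding.comp
    V.closed_of_finiteDimensional.isClosedEmbedding_subtypeVal).measurableEmbedding

lemma integral_heatMeasureAt {F : Type*} [NormedAddCommGroup F] [NormedSpace ℝ F]
    (g : E → F) (x : E) :
    ∫ z, g z ∂heatMeasureAt V t x = ∫ y, g (x + y) ∂heatMeasure V t :=
  (measurableEmbedding_add_coe V x).integral_map g

lemma charFun_heatMeasureAt (ht : 0 < t) (x w : E) :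
    charFun (heatMeasureAt V t x) w =
      cexp (⟪x, w⟫_ℝ * I) * cexp (-(t * ‖V.orthogonalProjectionOnto w‖ ^ 2)) := by
  rw [charFun_apply, integral_heatMeasureAt, ← charFun_heatMeasure ht, charFun_apply,
    ← integral_const_mul]
  congr 1 with y
  rw [inner_add_left, ofReal_add, add_mul, Complex.exp_add,
    Submodule.inner_orthogonalProjectionOnto_eq_of_mem_left]

end HeatMeasureAt

section IntegralTendsto

variable {X ι : Type*} [TopologicalSpace X] [MeasurableSpace X] [OpensMeasurableSpace X]

lemma BoundedContinuousFunction.dist_integral_le {F : Type*} [NormedAddCommGroup F]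
    [NormedSpace ℝ F] [SecondCountableTopology F] [MeasurableSpace F] [BorelSpace F]
    (μ : Measure X) [IsProbabilityMeasure μ] (f g : X →ᵇ F) :
    dist (∫ x, f x ∂μ) (∫ x, g x ∂μ) ≤ dist f g := by
  rw [dist_eq_norm, dist_eq_norm, ← integral_sub (f.integrable μ) (g.integrable μ)]
  exact (f - g).norm_integral_le_norm μ

variable (μ : ι → Measure X) [∀ i, IsProbabilityMeasure (μ i)] (ν : Measure X)
  [IsProbabilityMeasure ν] (l : Filter ι)

def integralTendstoSubmodule : Submodule ℂ (X →ᵇ ℂ) where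
  carrier := {f | Tendsto (fun i => ∫ x, f x ∂μ i) l (𝓝 (∫ x, f x ∂ν))}
  add_mem' {f g} hf hg := by
    simpa only [mem_ofPred_eq, coe_add, Pi.add_apply, integral_add (f.integrable _)
      (g.integrable _)] using hf.add hg
  zero_mem' := by
    simp only [mem_ofPred_eq, coe_zero, Pi.zero_apply, integral_zero, tendsto_const_nhds]
  smul_mem' c f hf := by
    simpa only [mem_ofPred_eq, BoundedContinuousFunction.coe_smul, integral_smul]
      using hf.const_smul c

lemma isClosed_integralTendstoSubmodule :
    IsClosed (integralTendstoSubmodule μ ν l : Set (X →ᵇ ℂ)) := by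
  refine isClosed_of_closure_subset fun f hf => Metric.tendsto_nhds.2 fun ε hε => ?_
  obtain ⟨g, hg, hfg⟩ := Metric.mem_closure_iff.1 hf (ε / 3) (by positivity)
  filter_upwards [Metric.tendsto_nhds.1 hg (ε / 3) (by positivity)] with i hi
  calc dist (∫ x, f x ∂μ i) (∫ x, f x ∂ν)
      ≤ dist (∫ x, f x ∂μ i) (∫ x, g x ∂μ i) + dist (∫ x, g x ∂μ i) (∫ x, g x ∂ν) +
          dist (∫ x, g x ∂ν) (∫ x, f x ∂ν) := dist_triangle4 _ _ _ _
    _ < ε / 3 + ε / 3 + ε / 3 := by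
        gcongr
        · exact (f.dist_integral_le _ g).trans_lt hfg
        · exact (g.dist_integral_le _ f).trans_lt (dist_comm f g ▸ hfg)
    _ = ε := by ring

lemma tendstoUniformlyOn_integral_of_isCompact {F : Type*} [NormedAddCommGroup F]
    [NormedSpace ℝ F] [SecondCountableTopology F] [MeasurableSpace F] [BorelSpace F]
    {K : Set (X →ᵇ F)} (hK : IsCompact K)
    (h : ∀ f ∈ K, Tendsto (fun i => ∫ x, f x ∂μ i) l (𝓝 (∫ x, f x ∂ν))) :
    TendstoUniformlyOn (fun i (f : X →ᵇ F) => ∫ x, f x ∂μ i) (fun f => ∫ x, f x ∂ν) l K := by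
  rw [← tendstoLocallyUniformlyOn_iff_tendstoUniformlyOn_of_compact hK,
    Metric.tendstoLocallyUniformlyOn_iff]
  intro ε hε f hf
  refine ⟨Metric.ball f (ε / 3), mem_nhdsWithin_of_mem_nhds (Metric.ball_mem_nhds f
    (by positivity)), ?_⟩
  filter_upwards [Metric.tendsto_nhds.1 (h f hf) (ε / 3) (by positivity)] with i hi g hg
  calc dist (∫ x, g x ∂ν) (∫ x, g x ∂μ i)
      ≤ dist (∫ x, g x ∂ν) (∫ x, f x ∂ν) + dist (∫ x, f x ∂ν) (∫ x, f x ∂μ i) +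
          dist (∫ x, f x ∂μ i) (∫ x, g x ∂μ i) := dist_triangle4 _ _ _ _
    _ < ε / 3 + ε / 3 + ε / 3 := by
        gcongr
        · exact (g.dist_integral_le _ f).trans_lt hg
        · rwa [dist_comm]
        · exact (f.dist_integral_le _ g).trans_lt (Metric.mem_ball'.1 hg)
    _ = ε := by ring

end IntegralTendsto

section Torus

variable {d : ℕ}

variable (d) in
def toUnitAddTorus : C(Euc d, UnitAddTorus (Fin d)) :=
  ⟨fun x i => (x i : UnitAddCircle), continuous_pi fun i => continuous_quotient_mk'.comp
    ((continuous_apply i).comp (PiLp.continuous_ofLp 2 _))⟩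

lemma isQuotientMap_toUnitAddTorus : IsQuotientMap (toUnitAddTorus d) :=
  ((IsOpenQuotientMap.piMap fun _ => QuotientAddGroup.isOpenQuotientMap_mk).comp
    (PiLp.homeomorph 2 fun _ : Fin d => ℝ).isOpenQuotientMap).isQuotientMap

lemma isIntVec_sub_of_toUnitAddTorus_eq {x y : Euc d}
    (h : toUnitAddTorus d x = toUnitAddTorus d y) : IsIntVec (y - x) := by
  intro i
  obtain ⟨n, hn⟩ := AddSubgroup.mem_zmultiples_iff.1 (QuotientAddGroup.eq.1 (congrFun h i))
  refine ⟨n, ?_⟩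
  simp only [zsmul_eq_mul, mul_one] at hn
  rw [PiLp.sub_apply, hn]
  ring

lemma exists_comp_toUnitAddTorus_eq {Z : Type*} [TopologicalSpace Z] (f : C(Euc d, Z))
    (hf : ∀ x z, IsIntVec z → f (x + z) = f x) :
    ∃ g : C(UnitAddTorus (Fin d), Z), g.comp (toUnitAddTorus d) = f :=
  ⟨isQuotientMap_toUnitAddTorus.lift f fun x y h => by
    rw [← hf x (y - x) (isIntVec_sub_of_toUnitAddTorus_eq h), add_sub_cancel],
    IsQuotientMap.lift_comp _ _ _⟩

variable (d) in
def compToUnitAddTorus : C(UnitAddTorus (Fin d), ℂ) →L[ℂ] Euc d →ᵇ ℂ :=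
  open ContinuousMap in (compContinuousCLM ℂ ℂ (toUnitAddTorus d)).comp
    (linearIsometryBoundedOfCompact _ ℂ ℂ).toContinuousLinearEquiv.toContinuousLinearMap

lemma compToUnitAddTorus_apply (g : C(UnitAddTorus (Fin d), ℂ)) (x : Euc d) :
    compToUnitAddTorus d g x = g (toUnitAddTorus d x) := rfl

lemma mem_of_isClosed_of_periodic {S : Submodule ℂ (Euc d →ᵇ ℂ)}
    (hS : IsClosed (S : Set (Euc d →ᵇ ℂ)))
    (hchar : ∀ k, compToUnitAddTorus d (UnitAddTorus.mFourier k) ∈ S) (f : Euc d →ᵇ ℂ)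
    (hf : ∀ x z, IsIntVec z → f (x + z) = f x) : f ∈ S := by
  obtain ⟨g, hg⟩ := exists_comp_toUnitAddTorus_eq f.toContinuousMap hf
  have hle : (Submodule.span ℂ (range UnitAddTorus.mFourier)).topologicalClosure ≤
      S.comap (compToUnitAddTorus d : C(UnitAddTorus (Fin d), ℂ) →ₗ[ℂ] Euc d →ᵇ ℂ) :=
    Submodule.topologicalClosure_minimal _ (Submodule.span_le.2 (range_subset_iff.2 hchar))
      (hS.preimage (compToUnitAddTorus d).continuous)
  rw [UnitAddTorus.span_mFourier_closure_eq_top] at hle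
  convert Submodule.mem_comap.1 (hle (Submodule.mem_top (x := g)))
  ext x
  exact (DFunLike.congr_fun hg x).symm

end Torus

section Characters

variable {d : ℕ}

def latticeFreq (k : Fin d → ℤ) : Euc d := WithLp.toLp 2 fun i => 2 * Real.pi * k i

lemma compToUnitAddTorus_mFourier_apply (k : Fin d → ℤ) (x : Euc d) :
    compToUnitAddTorus d (UnitAddTorus.mFourier k) x =
      ∏ i, cexp (2 * Real.pi * I * k i * x i) := by
  simp [compToUnitAddTorus_apply, UnitAddTorus.mFourier, toUnitAddTorus]

lemma compToUnitAddTorus_mFourier_eq_cexp_inner (k : Fin d → ℤ) (x : Euc d) :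
    compToUnitAddTorus d (UnitAddTorus.mFourier k) x = cexp (⟪x, latticeFreq k⟫_ℝ * I) := by
  rw [compToUnitAddTorus_mFourier_apply, ← Complex.exp_sum]
  congr 1
  simp only [latticeFreq, PiLp.inner_apply, RCLike.inner_apply, conj_trivial, ofReal_sum,
    ofReal_mul, Finset.sum_mul]
  refine Finset.sum_congr rfl fun i _ => ?_
  push_cast
  ring

lemma unitCube_eq_preimage : unitCube d = WithLp.ofLp ⁻¹' univ.pi fun _ => Icc (0 : ℝ) 1 := by
  ext x
  simp only [unitCube, mem_preimage, mem_univ_pi]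
  rfl

lemma volume_unitCube : volume (unitCube d) = 1 := by
  rw [unitCube_eq_preimage, (PiLp.volume_preserving_ofLp (Fin d)).measure_preimage
    (MeasurableSet.univ_pi fun _ => measurableSet_Icc).nullMeasurableSet, volume_pi_pi]
  simp

instance : IsProbabilityMeasure (volume.restrict (unitCube d)) :=
  ⟨by rw [Measure.restrict_apply_univ, volume_unitCube]⟩

lemma setIntegral_unitCube_prod (f : Fin d → ℝ → ℂ) :
    ∫ z in unitCube d, ∏ i, f i (z i) = ∏ i, ∫ x in Icc (0 : ℝ) 1, f i x := by
  rw [unitCube_eq_preimage, (PiLp.volume_preserving_ofLp (Fin d)).setIntegral_preimage_emb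
    (MeasurableEquiv.toLp 2 (Fin d → ℝ)).symm.measurableEmbedding (fun y => ∏ i, f i (y i)),
    volume_pi, Measure.restrict_pi_pi, integral_fintype_prod_eq_prod]

lemma setIntegral_Icc_cexp_int_mul (n : ℤ) :
    ∫ x in Icc (0 : ℝ) 1, cexp (2 * Real.pi * I * n * x) = if n = 0 then 1 else 0 := by
  rw [integral_Icc_eq_integral_Ioc, ← intervalIntegral.integral_of_le zero_le_one]
  split_ifs with hn
  · simp [hn]
  · have hc : 2 * Real.pi * I * n ≠ 0 := by simp [Real.pi_ne_zero, I_ne_zero, hn]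
    rw [integral_exp_mul_complex hc, ofReal_one, mul_one, ofReal_zero, mul_zero, Complex.exp_zero,
      show 2 * Real.pi * I * n = n * (2 * Real.pi * I) by ring, Complex.exp_int_mul_two_pi_mul_I,
      sub_self, zero_div]

lemma setIntegral_unitCube_mFourier (k : Fin d → ℤ) :
    ∫ z in unitCube d, compToUnitAddTorus d (UnitAddTorus.mFourier k) z =
      if k = 0 then 1 else 0 := by
  simp_rw [compToUnitAddTorus_mFourier_apply]
  rw [setIntegral_unitCube_prod fun i x => cexp (2 * Real.pi * I * k i * x)]
  simp_rw [setIntegral_Icc_cexp_int_mul]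
  split_ifs with hk
  · simp [hk]
  · obtain ⟨i, hi⟩ := Function.ne_iff.1 hk
    exact Finset.prod_eq_zero (Finset.mem_univ i) (if_neg hi)

end Characters

section IrrationalDirection

variable {d : ℕ} {e : Euc d}

lemma orthogonalProjectionOnto_latticeFreq_ne_zero (hirr : ¬ RatDir e) {k : Fin d → ℤ}
    (hk : k ≠ 0) : (ℝ ∙ e)ᗮ.orthogonalProjectionOnto (latticeFreq k) ≠ 0 := by
  rw [Ne, Submodule.orthogonalProjectionOnto_eq_zero_iff, Submodule.orthogonal_orthogonal,
    Submodule.mem_span_singleton]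
  rintro ⟨c, hc⟩
  have hcoord (i : Fin d) : c * e i = 2 * Real.pi * k i := congrArg (· i) hc
  obtain ⟨j, hj⟩ := Function.ne_iff.1 hk
  have hc0 : c ≠ 0 := by
    rintro rfl
    exact hj (by simpa [Real.pi_ne_zero] using (hcoord j).symm)
  exact hirr ⟨2 * Real.pi / c, k, fun i => by rw [div_mul_eq_mul_div, ← hcoord i]; field_simp⟩

lemma tendsto_integral_heatMeasureAt_mFourier (hirr : ¬ RatDir e) (k : Fin d → ℤ) :
    Tendsto (fun p : Ioi (0 : ℝ) × Euc d =>
        ∫ z, compToUnitAddTorus d (UnitAddTorus.mFourier k) z ∂heatMeasureAt (ℝ ∙ e)ᗮ p.1 p.2)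
      (comap (fun p => (p.1 : ℝ)) atTop)
      (𝓝 (∫ z in unitCube d, compToUnitAddTorus d (UnitAddTorus.mFourier k) z)) := by
  simp_rw [setIntegral_unitCube_mFourier, compToUnitAddTorus_mFourier_eq_cexp_inner]
  split_ifs with hk
  · have h0 : latticeFreq (0 : Fin d → ℤ) = 0 := by ext; simp [latticeFreq]
    simp [hk, h0, tendsto_const_nhds]
  set P := (ℝ ∙ e)ᗮ.orthogonalProjectionOnto (latticeFreq k)
  have ha : 0 < ‖P‖ ^ 2 :=
    pow_pos (norm_pos_iff.2 (orthogonalProjectionOnto_latticeFreq_ne_zero hirr hk)) 2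
  have hdecay : Tendsto (fun t : ℝ => Real.exp (-(t * ‖P‖ ^ 2))) atTop (𝓝 0) :=
    Real.tendsto_exp_atBot.comp (tendsto_neg_atTop_atBot.comp (tendsto_id.atTop_mul_const ha))
  rw [tendsto_zero_iff_norm_tendsto_zero]
  refine (hdecay.comp tendsto_comap).congr fun p => ?_
  rw [Function.comp_apply, ← charFun_apply, charFun_heatMeasureAt _ p.1.2, norm_mul,
    Complex.norm_exp_ofReal_mul_I, one_mul, Complex.norm_exp, ← ofReal_pow, ← ofReal_mul,
    ← ofReal_neg, ofReal_re]

lemma tendsto_integral_heatMeasureAt_of_periodic (hirr : ¬ RatDir e) (u : Euc d →ᵇ ℝ)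
    (hu : ∀ x z, IsIntVec z → u (x + z) = u x) :
    Tendsto (fun p : Ioi (0 : ℝ) × Euc d => ∫ z, u z ∂heatMeasureAt (ℝ ∙ e)ᗮ p.1 p.2)
      (comap (fun p => (p.1 : ℝ)) atTop) (𝓝 (∫ z in unitCube d, u z)) := by
  set uC : Euc d →ᵇ ℂ := ofRealCLM.compLeftContinuousBounded (Euc d) u
  have huC : uC ∈ integralTendstoSubmodule
      (fun p : Ioi (0 : ℝ) × Euc d => heatMeasureAt (ℝ ∙ e)ᗮ p.1 p.2)
      (volume.restrict (unitCube d)) (comap (fun p => (p.1 : ℝ)) atTop) :=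
    mem_of_isClosed_of_periodic (isClosed_integralTendstoSubmodule _ _ _)
      (tendsto_integral_heatMeasureAt_mFourier hirr) uC fun x z hz => by simp [uC, hu x z hz]
  simpa [uC, integral_complex_ofReal, Function.comp_def]
    using (Complex.continuous_re.tendsto _).comp huC

end IrrationalDirection

lemma cast_finrank_orthogonal_span_singleton {d : ℕ} {e : Euc d} (he : e ≠ 0) :
    (finrank ℝ (ℝ ∙ e)ᗮ : ℝ) = d - 1 := by
  have h := (ℝ ∙ e).finrank_add_finrank_orthogonal
  rw [finrank_span_singleton he, finrank_euclideanSpace_fin] at h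
  have h' : (1 + finrank ℝ (ℝ ∙ e)ᗮ : ℝ) = d := by exact_mod_cast h
  linarith

/-- The volume on `(ℝ ∙ e)ᗮ` is the Haar measure of a finite-dimensional inner product space, i.e.
`ℋ^{d-1}`. -/
theorem hyperplane_averaging (d : ℕ)
    (e : Euc d) (he : ‖e‖ = 1) (hirr : ¬ RatDir e)
    (F : Set (BoundedContinuousFunction (Euc d) ℝ)) (hFc : IsCompact F)
    (hFper : ∀ u ∈ F, ∀ (x z : Euc d), IsIntVec z → u (x + z) = u x) :
    ∀ η > 0, ∃ T : ℝ, ∀ t ≥ T, 0 < t → ∀ u ∈ F, ∀ x : Euc d,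
      |(∫ y : (ℝ ∙ e)ᗮ,
          u (x + (y : Euc d)) *
            ((4 * Real.pi * t) ^ (-((d : ℝ) - 1) / 2) *
              Real.exp (-‖(y : Euc d)‖ ^ 2 / (4 * t))))
        - ∫ z in unitCube d, u z| ≤ η := by
  intro η hη
  have hunif := tendstoUniformlyOn_integral_of_isCompact
    (fun p : Ioi (0 : ℝ) × Euc d => heatMeasureAt (ℝ ∙ e)ᗮ p.1 p.2)
    (volume.restrict (unitCube d)) (comap (fun p => (p.1 : ℝ)) atTop) hFc
    fun u hu => tendsto_integral_heatMeasureAt_of_periodic hirr u (hFper u hu)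
  obtain ⟨T, hT⟩ :=
    eventually_atTop.1 (eventually_comap.1 (Metric.tendstoUniformlyOn_iff.1 hunif η hη))
  refine ⟨T, fun t ht ht0 u hu x => ?_⟩
  have hdist := hT t ht (⟨t, ht0⟩, x) rfl u hu
  rw [dist_comm, Real.dist_eq, integral_heatMeasureAt, integral_heatMeasure ht0.le] at hdist
  have hrank := cast_finrank_orthogonal_span_singleton (norm_ne_zero_iff.1 (he ▸ one_ne_zero))
  refine (le_of_eq ?_).trans hdist.le
  congr 3 with y
  rw [smul_eq_mul, mul_comm, heatKernel, hrank]
  rfl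

end
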